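/- arXiv:1601.01870 — 2 statements merged into one kernel-verified Lean document; each statement's English description precedes it below -/
import Mathlib

section
/- Let $T \in \mathfrak{sl}(m|n)$ (a supertraceless matrix) and define the tensor $S$ entrywise by $S^a{}_b{}^c{}_d{}^e{}_f = (-1)^{|d|}\delta^e{}_d\delta^c{}_f T^a{}_b - \tfrac{1}{m-n}\delta^c{}_d\delta^e{}_f T^a{}_b - (-1)^{|b|+(|a|+|b|)(|c|+|d|)}\delta^e{}_b\delta^a{}_f T^c{}_d + \tfrac{1}{m-n}\delta^a{}_b\delta^e{}_f T^c{}_d + (-1)^{|b|+(|a|+|b|)|c|+|d||e|}\delta^a{}_d\delta^e{}_b T^c{}_f - \tfrac{1}{m-n}(-1)^{|d|+(|a|+|b|)(|c|+|d|)}\delta^a{}_d\delta^e{}_f T^c{}_b - (-1)^{(|c|+|d|)|b|+|d|+|b||e|}\delta^c{}_b\delta^e{}_d T^a{}_f + \tfrac{1}{m-n}(-1)^{|b|}\delta^c{}_b\delta^e{}_f T^a{}_d$, with $m \neq n$. Then the three partial supertraces vanish: $\mathrm{str}_{1,2}S = \mathrm{str}_{3,4}S = \mathrm{str}_{5,6}S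 = 0$. -/
open Finset

/-- Parity of a basis index of ℂ^{m|n}: 0 for i ≤ m, 1 otherwise. -/
def par (m n : ℕ) (i : Fin (m + n)) : ℕ := if (i : ℕ) < m then 0 else 1

/-- Kronecker delta. -/
def kd {N : ℕ} (i j : Fin N) : ℂ := if i = j then 1 else 0

/-- The supertrace. -/
noncomputable def str (m n : ℕ) (A : Matrix (Fin (m + n)) (Fin (m + n)) ℂ) : ℂ :=
  ∑ i : Fin (m + n), (-1 : ℂ) ^ par m n i * A i i

/-- The special tensor S ∈ g⊗g⊗g built from T ∈ sl(m|n), given entrywise by the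
eight-term formula of the paper. -/
noncomputable def S (m n : ℕ) (T : Matrix (Fin (m + n)) (Fin (m + n)) ℂ)
    (a b c d e f : Fin (m + n)) : ℂ :=
  (-1 : ℂ) ^ par m n d * kd e d * kd c f * T a b -
    (1 / ((m : ℂ) - n)) * kd c d * kd e f * T a b -
    (-1 : ℂ) ^ (par m n b + (par m n a + par m n b) * (par m n c + par m n d)) *
      kd e b * kd a f * T c d +
    (1 / ((m : ℂ) - n)) * kd a b * kd e f * T c d +
    (-1 : ℂ) ^ (par m n b + (par m n a + par m n b) * par m n c + par m n d * par m n e) *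
      kd a d * kd e b * T c f -
    (1 / ((m : ℂ) - n)) *
      (-1 : ℂ) ^ (par m n d + (par m n a + par m n b) * (par m n c + par m n d)) *
      kd a d * kd e f * T c b -
    (-1 : ℂ) ^ ((par m n c + par m n d) * par m n b + par m n d + par m n b * par m n e) *
      kd c b * kd e d * T a f +
    (1 / ((m : ℂ) - n)) * (-1 : ℂ) ^ par m n b * kd c b * kd e f * T a d


lemma par01 (m n : ℕ) (i : Fin (m+n)) : par m n i = 0 ∨ par m n i = 1 := by
  unfold par; split <;> simp

lemma sum_eps (m n : ℕ) : ∑ i : Fin (m+n), (-1:ℂ)^par m n i = (m:ℂ) - (n:ℂ) := by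
  rw [Fin.sum_univ_add]
  have h1 : ∀ i : Fin m, (-1:ℂ)^par m n (Fin.castAdd n i) = 1 := by
    intro i; simp [par, i.isLt]
  have h2 : ∀ i : Fin n, (-1:ℂ)^par m n (Fin.natAdd m i) = -1 := by
    intro i; simp [par]
  simp [h1, h2, sub_eq_add_neg]

lemma sum_pick_left {N : ℕ} (j : Fin N) (g : Fin N → ℂ) : ∑ i, kd i j * g i = g j := by
  simp [kd, ite_mul, Finset.sum_ite_eq']

lemma sum_pick_right {N : ℕ} (j : Fin N) (g : Fin N → ℂ) : ∑ i, kd j i * g i = g j := by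
  simp [kd, ite_mul, Finset.sum_ite_eq]

lemma hsub (m n : ℕ) (hmn : m ≠ n) : ((m:ℂ) - (n:ℂ)) ≠ 0 := by
  refine sub_ne_zero.mpr ?_
  exact_mod_cast hmn

@[simp] lemma kd_self {N : ℕ} (i : Fin N) : kd i i = 1 := by simp [kd]

set_option maxHeartbeats 1000000 in
lemma trace1 (m n : ℕ) (hmn : m ≠ n) (T : Matrix (Fin (m + n)) (Fin (m + n)) ℂ)
    (hT : str m n T = 0) (c d e f : Fin (m+n)) :
    ∑ a : Fin (m + n), (-1 : ℂ) ^ par m n a * S m n T a a c d e f = 0 := by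
  unfold str at hT
  have key : ∀ x : Fin (m+n), (-1:ℂ)^par m n x * S m n T x x c d e f =
      ((-1:ℂ)^par m n d * kd e d * kd c f) * ((-1:ℂ)^par m n x * T x x)
    - ((1/((m:ℂ)-n)) * kd c d * kd e f) * ((-1:ℂ)^par m n x * T x x)
    - T c d * (kd e x * kd x f)
    + ((1/((m:ℂ)-n)) * kd e f * T c d) * ((-1:ℂ)^par m n x)
    + ((-1:ℂ)^(par m n d * par m n e) * T c f) * (kd x d * kd e x)
    - ((1/((m:ℂ)-n)) * (-1:ℂ)^(par m n d) * kd e f) * (kd x d * ((-1:ℂ)^par m n x * T c x))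
    - kd e d * (kd c x * ((-1:ℂ)^par m n x * (-1:ℂ)^((par m n c + par m n d)*par m n x + par m n d + par m n x * par m n e) * T x f))
    + ((1/((m:ℂ)-n)) * kd e f) * (kd c x * T x d) := by
    intro x
    simp only [S]
    rcases par01 m n x with h1|h1 <;> rcases par01 m n c with h2|h2 <;>
      rcases par01 m n d with h3|h3 <;> rcases par01 m n e with h4|h4 <;>
      simp only [h1, h2, h3, h4, kd_self] <;> norm_num <;> ring
  rw [Finset.sum_congr rfl (fun x _ => key x)]
  simp only [Finset.sum_add_distrib, Finset.sum_sub_distrib, ← Finset.mul_sum]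
  rw [hT, sum_eps, sum_pick_right e (fun x => kd x f),
    sum_pick_left d (fun x => kd e x),
    sum_pick_left d (fun x => (-1:ℂ)^par m n x * T c x),
    sum_pick_right c (fun x => (-1:ℂ)^par m n x * (-1:ℂ)^((par m n c + par m n d)*par m n x + par m n d + par m n x * par m n e) * T x f),
    sum_pick_right c (fun x => T x d)]
  clear key hT
  have hs := hsub m n hmn
  by_cases hed : e = d
  · subst hed
    rcases par01 m n c with h2|h2 <;> rcases par01 m n e with h3|h3 <;>
      simp only [h2, h3, kd_self] <;> norm_num <;> field_simp <;> ring
  · have h0 : kd e d = 0 := by simp [kd, hed]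
    rcases par01 m n d with h3|h3 <;>
      simp only [h0, h3, zero_mul, mul_zero] <;> norm_num <;> field_simp <;> ring

set_option maxHeartbeats 1000000 in
lemma trace2 (m n : ℕ) (hmn : m ≠ n) (T : Matrix (Fin (m + n)) (Fin (m + n)) ℂ)
    (hT : str m n T = 0) (a b e f : Fin (m+n)) :
    ∑ c : Fin (m + n), (-1 : ℂ) ^ par m n c * S m n T a b c c e f = 0 := by
  unfold str at hT
  have key : ∀ x : Fin (m+n), (-1:ℂ)^par m n x * S m n T a b x x e f =
      T a b * (kd e x * kd x f)
    - ((1/((m:ℂ)-n)) * kd e f * T a b) * ((-1:ℂ)^par m n x)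
    - ((-1:ℂ)^par m n b * kd e b * kd a f) * ((-1:ℂ)^par m n x * T x x)
    + ((1/((m:ℂ)-n)) * kd a b * kd e f) * ((-1:ℂ)^par m n x * T x x)
    + kd e b * (kd a x * ((-1:ℂ)^par m n x * (-1:ℂ)^(par m n b + (par m n a + par m n b)*par m n x + par m n x * par m n e) * T x f))
    - ((1/((m:ℂ)-n)) * kd e f) * (kd a x * T x b)
    - ((-1:ℂ)^(par m n b * par m n e) * T a f) * (kd x b * kd e x)
    + ((1/((m:ℂ)-n)) * (-1:ℂ)^par m n b * kd e f) * (kd x b * ((-1:ℂ)^par m n x * T a x)) := by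
    intro x
    simp only [S]
    rcases par01 m n x with h1|h1 <;> rcases par01 m n a with h2|h2 <;>
      rcases par01 m n b with h3|h3 <;> rcases par01 m n e with h4|h4 <;>
      simp only [h1, h2, h3, h4, kd_self] <;> norm_num <;> ring
  rw [Finset.sum_congr rfl (fun x _ => key x)]
  simp only [Finset.sum_add_distrib, Finset.sum_sub_distrib, ← Finset.mul_sum]
  rw [hT, sum_eps, sum_pick_right e (fun x => kd x f),
    sum_pick_right a (fun x => (-1:ℂ)^par m n x * (-1:ℂ)^(par m n b + (par m n a + par m n b)*par m n x + par m n x * par m n e) * T x f),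
    sum_pick_right a (fun x => T x b),
    sum_pick_left b (fun x => kd e x),
    sum_pick_left b (fun x => (-1:ℂ)^par m n x * T a x)]
  clear key hT
  have hs := hsub m n hmn
  by_cases heb : e = b
  · subst heb
    rcases par01 m n a with h2|h2 <;> rcases par01 m n e with h3|h3 <;>
      simp only [h2, h3, kd_self] <;> norm_num <;> field_simp <;> ring
  · have h0 : kd e b = 0 := by simp [kd, heb]
    rcases par01 m n b with h3|h3 <;>
      simp only [h0, h3, zero_mul, mul_zero] <;> norm_num <;> field_simp <;> ring

set_option maxHeartbeats 2000000 in
lemma trace3 (m n : ℕ) (hmn : m ≠ n) (T : Matrix (Fin (m + n)) (Fin (m + n)) ℂ)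
    (hT : str m n T = 0) (a b c d : Fin (m+n)) :
    ∑ e : Fin (m + n), (-1 : ℂ) ^ par m n e * S m n T a b c d e e = 0 := by
  have key : ∀ x : Fin (m+n), (-1:ℂ)^par m n x * S m n T a b c d x x =
      ((-1:ℂ)^par m n d * T a b) * (kd c x * ((-1:ℂ)^par m n x * kd x d))
    - ((1/((m:ℂ)-n)) * kd c d * T a b) * ((-1:ℂ)^par m n x)
    - ((-1:ℂ)^(par m n b + (par m n a + par m n b)*(par m n c + par m n d)) * T c d) * (kd a x * ((-1:ℂ)^par m n x * kd x b))
    + ((1/((m:ℂ)-n)) * kd a b * T c d) * ((-1:ℂ)^par m n x)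
    + kd a d * (kd x b * ((-1:ℂ)^par m n x * (-1:ℂ)^(par m n b + (par m n a + par m n b)*par m n c + par m n d * par m n x) * T c x))
    - ((1/((m:ℂ)-n)) * (-1:ℂ)^(par m n d + (par m n a + par m n b)*(par m n c + par m n d)) * kd a d * T c b) * ((-1:ℂ)^par m n x)
    - kd c b * (kd x d * ((-1:ℂ)^par m n x * (-1:ℂ)^((par m n c + par m n d)*par m n b + par m n d + par m n b * par m n x) * T a x))
    + ((1/((m:ℂ)-n)) * (-1:ℂ)^par m n b * kd c b * T a d) * ((-1:ℂ)^par m n x) := by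
    intro x
    simp only [S]
    rcases par01 m n x with h1|h1 <;> rcases par01 m n a with h2|h2 <;>
      rcases par01 m n b with h3|h3 <;> rcases par01 m n c with h4|h4 <;>
      rcases par01 m n d with h5|h5 <;>
      simp only [h1, h2, h3, h4, h5, kd_self] <;> norm_num <;> ring
  rw [Finset.sum_congr rfl (fun x _ => key x)]
  simp only [Finset.sum_add_distrib, Finset.sum_sub_distrib, ← Finset.mul_sum]
  rw [sum_eps, sum_pick_right c (fun x => (-1:ℂ)^par m n x * kd x d),
    sum_pick_right a (fun x => (-1:ℂ)^par m n x * kd x b),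
    sum_pick_left b (fun x => (-1:ℂ)^par m n x * (-1:ℂ)^(par m n b + (par m n a + par m n b)*par m n c + par m n d * par m n x) * T c x),
    sum_pick_left d (fun x => (-1:ℂ)^par m n x * (-1:ℂ)^((par m n c + par m n d)*par m n b + par m n d + par m n b * par m n x) * T a x)]
  clear key hT
  have hs := hsub m n hmn
  rcases par01 m n a with h1|h1 <;> rcases par01 m n b with h2|h2 <;>
    rcases par01 m n c with h3|h3 <;> rcases par01 m n d with h4|h4 <;>
    by_cases hcd : c = d <;> by_cases hab : a = b <;> by_cases had : a = d <;>
    by_cases hcb : c = b <;>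
    simp_all only [kd, if_pos, if_neg, ne_eq, not_false_iff, reduceIte] <;>
    first
      | (field_simp; try ring; done)
      | simp_all

/-- for m ≠ n and T supertraceless, all three partial supertraces of
the tensor S vanish: str₁,₂ S = str₃,₄ S = str₅,₆ S = 0, so S ∈ g⊗g⊗g. -/
theorem statement13 (m n : ℕ) (hmn : m ≠ n) (T : Matrix (Fin (m + n)) (Fin (m + n)) ℂ)
    (hT : str m n T = 0) :
    (∀ c d e f, ∑ a : Fin (m + n), (-1 : ℂ) ^ par m n a * S m n T a a c d e f = 0) ∧
      (∀ a b e f, ∑ c : Fin (m + n), (-1 : ℂ) ^ par m n c * S m n T a b c c e f = 0) ∧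
      ∀ a b c d, ∑ e : Fin (m + n), (-1 : ℂ) ^ par m n e * S m n T a b c d e e = 0 := by
  exact ⟨trace1 m n hmn T hT, trace2 m n hmn T hT, trace3 m n hmn T hT⟩
end

section
/- Let $A$ be an associative algebra, $K \subseteq A$ a two-sided ideal, and suppose the filtration subquotients $K_k$ (with respect to an exhaustive algebra filtration $A_{\leq k}$) satisfy: $K_k = A_k$ (the $k$-th subquotient of $A$) for some $k$. Then $K_l = A_l$ for all $l \geq k$. -/
/-- let A be an algebra with an exhaustive multiplicative filtration
F (with F j · F k ⊆ F (j+k), generated in degree 1: F (k+1) = F k · F 1 + F k),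
and K a two-sided ideal. If the k-th filtration subquotient of K fills the whole
k-th subquotient of A, i.e. F (k+1) ≤ K + F k, then the same holds in every higher
degree: F (l+1) ≤ K + F l for all l ≥ k. -/
theorem statement18 {A : Type*} [Ring A] [Algebra ℂ A]
    (F : ℕ → Submodule ℂ A) (hmono : Monotone F) (hexh : ∀ a : A, ∃ k, a ∈ F k)
    (hmul : ∀ i j : ℕ, ∀ a b : A, a ∈ F i → b ∈ F j → a * b ∈ F (i + j))
    (hgen : ∀ j : ℕ,
      F (j + 1) ≤ F j ⊔ Submodule.span ℂ {y : A | ∃ a ∈ F j, ∃ b ∈ F 1, y = a * b})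
    (K : Submodule ℂ A)
    (hK : ∀ x ∈ K, ∀ a : A, a * x ∈ K ∧ x * a ∈ K)
    (k : ℕ) (hk : F (k + 1) ≤ K ⊔ F k) :
    ∀ l : ℕ, k ≤ l → F (l + 1) ≤ K ⊔ F l := by
  intro l hl
  induction l, hl using Nat.le_induction with
  | base => exact hk
  | succ n hn ih =>
    refine (hgen (n + 1)).trans (sup_le (le_trans ?_ le_sup_right) ?_)
    · exact le_refl _
    · rw [Submodule.span_le]
      rintro y ⟨a, ha, b, hb, rfl⟩
      obtain ⟨x, hx, f, hf, rfl⟩ := Submodule.mem_sup.mp (ih ha)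
      have h1 : x * b ∈ K := (hK x hx b).2
      have h2 : f * b ∈ F (n + 1) := hmul n 1 f b hf hb
      have : (x + f) * b = x * b + f * b := add_mul x f b
      rw [this]
      exact Submodule.add_mem _ (Submodule.mem_sup_left h1) (Submodule.mem_sup_right h2)
end
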